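/- (Sound value iteration for stochastic games without end components — correctness of the approximations, Theorem 3.2.) Fix a finite stochastic game with partition (F, Z, S?) and value V = lfp B, and let reach_k, stay_k, l_k, u_k, dl_k, du_k be any sequences satisfying the sound-value-iteration recursion described in the context (for some admissible choice functions α_{k+1}). Then for every k ≥ 0 and every s ∈ S?: reach_k(s) + stay_k(s)·l_k ≤ V(s) ≤ reach_k(s) + stay_k(s)·u_k. -/

import Mathlib

/-- A finite (turn-based simple) stochastic game with a partition of the state
space into Maximizer states `SBox` (the rest being Minimizer states), target
states `F`, sink states `Z`, and the remaining unknown states `S \ (F ∪ Z)`. -/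
structure SG (S A : Type) [Fintype S] [DecidableEq S] where
  /-- Maximizer states; all other states belong to Minimizer. -/
  SBox : Finset S
  /-- Target states. -/
  F : Finset S
  /-- Sink states. -/
  Z : Finset S
  hFZ : Disjoint F Z
  /-- Available actions (a nonempty finite set in each state). -/
  Av : S → Finset A
  Av_ne : ∀ s, (Av s).Nonempty
  /-- Transition probabilities. -/
  δ : S → A → S → ℝ
  δ_nonneg : ∀ s a s', 0 ≤ δ s a s'
  δ_sum : ∀ s, ∀ a ∈ Av s, ∑ s', δ s a s' = 1

namespace SG

variable {S A : Type} [Fintype S] [DecidableEq S]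

/-- The unknown states `S? = S \ (F ∪ Z)`. -/
def SUnk (G : SG S A) : Finset S := Finset.univ \ (G.F ∪ G.Z)

/-- The Bellman operator: `1` on targets, `0` on sinks, max over available actions
in Maximizer states and min over available actions in Minimizer states. -/
noncomputable def bellman (G : SG S A) (g : S → ℝ) : S → ℝ := fun s =>
  if s ∈ G.F then 1
  else if s ∈ G.Z then 0
  else if s ∈ G.SBox then (G.Av s).sup' (G.Av_ne s) fun a => ∑ s', G.δ s a s' * g s'
  else (G.Av s).inf' (G.Av_ne s) fun a => ∑ s', G.δ s a s' * g s'

/-- `V` is the value of the game: the least fixed point of the Bellman operator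
among functions `S → [0,1]`. -/
def IsValue (G : SG S A) (V : S → ℝ) : Prop :=
  (∀ s, V s ∈ Set.Icc (0 : ℝ) 1) ∧ G.bellman V = V ∧
    ∀ g : S → ℝ, (∀ s, g s ∈ Set.Icc (0 : ℝ) 1) → G.bellman g = g → ∀ s, V s ≤ g s

/-- `T` is an end component: there is a nonempty set of actions `B'` available in `T`
that stays inside `T`, and using which every state of `T` can reach every other. -/
def IsEC (G : SG S A) (T : Set S) : Prop :=
  T.Nonempty ∧ ∃ B' : Set A, B'.Nonempty ∧ (B' ⊆ ⋃ s ∈ T, (G.Av s : Set A)) ∧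
    (∀ s ∈ T, ∀ a ∈ B', a ∈ G.Av s → ∀ s', 0 < G.δ s a s' → s' ∈ T) ∧
    (∀ s ∈ T, ∀ s' ∈ T, Relation.ReflTransGen
      (fun x y => x ∈ T ∧ ∃ a ∈ B', a ∈ G.Av x ∧ 0 < G.δ x a y) s s')

end SG

namespace SG

variable {S A : Type} [Fintype S] [DecidableEq S]

open scoped Classical in
/-- Decision value of a Maximizer state `s` with chosen action `α` (w.r.t. one-step
values `reach`, `stay`): the maximum, over actions `β` with
`Δstay(α,β) = ∑(δ(s,α)−δ(s,β))·stay > 0`, of `Δreach(β,α)/Δstay(α,β)`;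
defaulting to `0` when no `β` qualifies. -/
noncomputable def dvalBox (G : SG S A) (reach stay : S → ℝ) (s : S) (α : A) : ℝ :=
  let Q := (G.Av s).filter fun β => 0 < ∑ s', (G.δ s α s' - G.δ s β s') * stay s'
  if h : Q.Nonempty then
    Q.sup' h fun β => (∑ s', (G.δ s β s' - G.δ s α s') * reach s') /
      (∑ s', (G.δ s α s' - G.δ s β s') * stay s')
  else 0

open scoped Classical in
/-- Decision value of a Minimizer state `s` with chosen action `α`: the minimum, over
actions `β` with `Δstay(α,β) > 0`, of `Δreach(β,α)/Δstay(α,β)`; defaulting to `1`. -/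
noncomputable def dvalCirc (G : SG S A) (reach stay : S → ℝ) (s : S) (α : A) : ℝ :=
  let Q := (G.Av s).filter fun β => 0 < ∑ s', (G.δ s α s' - G.δ s β s') * stay s'
  if h : Q.Nonempty then
    Q.inf' h fun β => (∑ s', (G.δ s β s' - G.δ s α s') * reach s') /
      (∑ s', (G.δ s α s' - G.δ s β s') * stay s')
  else 1

open scoped Classical in
/-- The sound-value-iteration recursion for stochastic games: step-bounded
probabilities `reach_k`, `stay_k` under `k`-step optimal action choices `α`,
dynamic global bounds `l_k ≤ u_k` and decision values `dl_k`, `du_k`. -/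
def SVIRec (G : SG S A) (hne : G.SUnk.Nonempty)
    (reach stay : ℕ → S → ℝ) (α : ℕ → S → A) (l u dl du : ℕ → ℝ) : Prop :=
  (∀ k, ∀ s ∈ G.F, reach k s = 1 ∧ stay k s = 0) ∧
  (∀ k, ∀ s ∈ G.Z, reach k s = 0 ∧ stay k s = 0) ∧
  (∀ s ∈ G.SUnk, reach 0 s = 0 ∧ stay 0 s = 1) ∧
  l 0 = 0 ∧ u 0 = 1 ∧ du 0 = 0 ∧ dl 0 = 1 ∧
  (∀ k, ∀ s ∈ G.SUnk, α (k + 1) s ∈ G.Av s) ∧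
  (∀ k, ∀ s ∈ G.SUnk, s ∈ G.SBox → ∀ a ∈ G.Av s,
      ∑ s', G.δ s a s' * (reach k s' + stay k s' * u k) ≤
        ∑ s', G.δ s (α (k + 1) s) s' * (reach k s' + stay k s' * u k)) ∧
  (∀ k, ∀ s ∈ G.SUnk, s ∉ G.SBox → ∀ a ∈ G.Av s,
      ∑ s', G.δ s (α (k + 1) s) s' * (reach k s' + stay k s' * l k) ≤
        ∑ s', G.δ s a s' * (reach k s' + stay k s' * l k)) ∧
  (∀ k, ∀ s ∈ G.SUnk, reach (k + 1) s = ∑ s', G.δ s (α (k + 1) s) s' * reach k s') ∧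
  (∀ k, ∀ s ∈ G.SUnk, stay (k + 1) s = ∑ s', G.δ s (α (k + 1) s) s' * stay k s') ∧
  (∀ k, du (k + 1) = if h : (G.SUnk ∩ G.SBox).Nonempty
      then max (du k)
        ((G.SUnk ∩ G.SBox).sup' h fun s => G.dvalBox (reach k) (stay k) s (α (k + 1) s))
      else du k) ∧
  (∀ k, dl (k + 1) = if h : (G.SUnk \ G.SBox).Nonempty
      then min (dl k)
        ((G.SUnk \ G.SBox).inf' h fun s => G.dvalCirc (reach k) (stay k) s (α (k + 1) s))
      else dl k) ∧
  (∀ k, u (k + 1) = if ∀ s ∈ G.SUnk, stay (k + 1) s < 1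
      then min (u k) (max (du (k + 1))
        (G.SUnk.sup' hne fun s => reach (k + 1) s / (1 - stay (k + 1) s)))
      else u k) ∧
  (∀ k, l (k + 1) = if ∀ s ∈ G.SUnk, stay (k + 1) s < 1
      then max (l k) (min (dl (k + 1))
        (G.SUnk.inf' hne fun s => reach (k + 1) s / (1 - stay (k + 1) s)))
      else l k)

end SG

/-!
The action `α_{k+1}(s)` is optimal for the continuation value `u_k`, and the decision value
`d(s)` is the continuation value below which another action would overtake it: for every
`x ∈ [du_{k+1}, u_k]` the action `α_{k+1}(s)` is still optimal for `x`. The quantity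
`x_k = max(du_k, max_{S?} V)` is nondecreasing and stays below `u_k`, so monotonicity of the
Bellman operator propagates `V ≤ reach_k + stay_k · x_k` from `k` to `k + 1`. Evaluated at a
state where `V` is maximal this bound gives `max_{S?} V ≤ reach_{k+1}/(1 - stay_{k+1})`, which
keeps `u_{k+1} ≥ max_{S?} V`. The lower bound is dual.
-/

open Function

section AffineComparison

variable {R₁ S₁ R₂ S₂ x : ℝ}

-- Two affine functions `y ↦ R + S y` cross at most once, at `(R₂ - R₁) / (S₁ - S₂)`.
lemma add_mul_le_add_mul_of_div_le {u : ℝ} (hxu : x ≤ u) (hu : R₂ + S₂ * u ≤ R₁ + S₁ * u)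
    (hdiv : 0 < S₁ - S₂ → (R₂ - R₁) / (S₁ - S₂) ≤ x) : R₂ + S₂ * x ≤ R₁ + S₁ * x := by
  rcases lt_or_ge 0 (S₁ - S₂) with hpos | hle
  · have := (div_le_iff₀ hpos).1 (hdiv hpos)
    linarith
  · nlinarith

lemma add_mul_le_add_mul_of_le_div {l : ℝ} (hlx : l ≤ x) (hl : R₁ + S₁ * l ≤ R₂ + S₂ * l)
    (hdiv : 0 < S₁ - S₂ → x ≤ (R₂ - R₁) / (S₁ - S₂)) : R₁ + S₁ * x ≤ R₂ + S₂ * x := by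
  rcases lt_or_ge 0 (S₁ - S₂) with hpos | hle
  · have := (le_div_iff₀ hpos).1 (hdiv hpos)
    linarith
  · nlinarith

lemma le_div_one_sub_of_le_add_mul {m r s : ℝ} (hs : s < 1) (h : m ≤ r + s * m) :
    m ≤ r / (1 - s) := by
  rw [le_div_iff₀ (sub_pos.2 hs)]
  linarith

lemma div_one_sub_le_of_add_mul_le {m r s : ℝ} (hs : s < 1) (h : r + s * m ≤ m) :
    r / (1 - s) ≤ m := by
  rw [div_le_iff₀ (sub_pos.2 hs)]
  linarith

end AffineComparison

namespace SG

variable {S A : Type} [Fintype S] [DecidableEq S] (G : SG S A)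

lemma mem_SUnk_iff {s : S} : s ∈ G.SUnk ↔ s ∉ G.F ∧ s ∉ G.Z := by
  simp [SUnk, not_or]

lemma mem_F_or_mem_Z_or_mem_SUnk (s : S) : s ∈ G.F ∨ s ∈ G.Z ∨ s ∈ G.SUnk := by
  by_cases hF : s ∈ G.F <;> by_cases hZ : s ∈ G.Z <;> simp [mem_SUnk_iff, *]

lemma sum_mul_add_mul (s : S) (a : A) (r st : S → ℝ) (x : ℝ) :
    ∑ s', G.δ s a s' * (r s' + st s' * x) =
      ∑ s', G.δ s a s' * r s' + (∑ s', G.δ s a s' * st s') * x := by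
  simp only [mul_add, Finset.sum_add_distrib, Finset.sum_mul, mul_assoc]

variable {G} {V : S → ℝ}

lemma eq_one_of_isFixedPt (hV : IsFixedPt G.bellman V) {s : S} (hs : s ∈ G.F) : V s = 1 := by
  rw [← hV.eq, bellman, if_pos hs]

lemma eq_zero_of_isFixedPt (hV : IsFixedPt G.bellman V) {s : S} (hs : s ∈ G.Z) : V s = 0 := by
  rw [← hV.eq, bellman, if_neg (Finset.disjoint_right.1 G.hFZ hs), if_pos hs]

lemma le_sum_of_isFixedPt (hV : IsFixedPt G.bellman V) {g : S → ℝ} (hVg : ∀ s, V s ≤ g s)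
    {s : S} (hs : s ∈ G.SUnk) {a : A} (ha : a ∈ G.Av s)
    (hopt : s ∈ G.SBox → ∀ b ∈ G.Av s, ∑ s', G.δ s b s' * g s' ≤ ∑ s', G.δ s a s' * g s') :
    V s ≤ ∑ s', G.δ s a s' * g s' := by
  have hmono : ∀ b, ∑ s', G.δ s b s' * V s' ≤ ∑ s', G.δ s b s' * g s' := fun b =>
    Finset.sum_le_sum fun s' _ => mul_le_mul_of_nonneg_left (hVg s') (G.δ_nonneg s b s')
  obtain ⟨hF, hZ⟩ := G.mem_SUnk_iff.1 hs
  rw [← hV.eq, bellman, if_neg hF, if_neg hZ]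
  split_ifs with hb
  · exact Finset.sup'_le _ _ fun b hb' => (hmono b).trans (hopt hb b hb')
  · exact (Finset.inf'_le _ ha).trans (hmono a)

lemma sum_le_of_isFixedPt (hV : IsFixedPt G.bellman V) {g : S → ℝ} (hgV : ∀ s, g s ≤ V s)
    {s : S} (hs : s ∈ G.SUnk) {a : A} (ha : a ∈ G.Av s)
    (hopt : s ∉ G.SBox → ∀ b ∈ G.Av s, ∑ s', G.δ s a s' * g s' ≤ ∑ s', G.δ s b s' * g s') :
    ∑ s', G.δ s a s' * g s' ≤ V s := by
  have hmono : ∀ b, ∑ s', G.δ s b s' * g s' ≤ ∑ s', G.δ s b s' * V s' := fun b =>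
    Finset.sum_le_sum fun s' _ => mul_le_mul_of_nonneg_left (hgV s') (G.δ_nonneg s b s')
  obtain ⟨hF, hZ⟩ := G.mem_SUnk_iff.1 hs
  rw [← hV.eq, bellman, if_neg hF, if_neg hZ]
  split_ifs with hb
  · exact (hmono a).trans (Finset.le_sup' (fun b => ∑ s', G.δ s b s' * V s') ha)
  · exact Finset.le_inf' _ _ fun b hb' => (hopt hb b hb').trans (hmono b)

variable (G)

section DecisionValue

variable (r st : S → ℝ) (s : S) (a : A)

lemma div_le_dvalBox {b : A} (hb : b ∈ G.Av s)
    (hpos : 0 < ∑ s', (G.δ s a s' - G.δ s b s') * st s') :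
    (∑ s', (G.δ s b s' - G.δ s a s') * r s') / (∑ s', (G.δ s a s' - G.δ s b s') * st s') ≤
      G.dvalBox r st s a := by
  classical
  have hmem : b ∈ (G.Av s).filter fun β => 0 < ∑ s', (G.δ s a s' - G.δ s β s') * st s' :=
    Finset.mem_filter.2 ⟨hb, hpos⟩
  rw [dvalBox, dif_pos ⟨b, hmem⟩]
  exact Finset.le_sup' (fun β => (∑ s', (G.δ s β s' - G.δ s a s') * r s') /
    (∑ s', (G.δ s a s' - G.δ s β s') * st s')) hmem

lemma dvalCirc_le_div {b : A} (hb : b ∈ G.Av s)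
    (hpos : 0 < ∑ s', (G.δ s a s' - G.δ s b s') * st s') :
    G.dvalCirc r st s a ≤
      (∑ s', (G.δ s b s' - G.δ s a s') * r s') / (∑ s', (G.δ s a s' - G.δ s b s') * st s') := by
  classical
  have hmem : b ∈ (G.Av s).filter fun β => 0 < ∑ s', (G.δ s a s' - G.δ s β s') * st s' :=
    Finset.mem_filter.2 ⟨hb, hpos⟩
  rw [dvalCirc, dif_pos ⟨b, hmem⟩]
  exact Finset.inf'_le (fun β => (∑ s', (G.δ s β s' - G.δ s a s') * r s') /
    (∑ s', (G.δ s a s' - G.δ s β s') * st s')) hmem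

lemma dvalBox_le {u : ℝ} (hu : 0 ≤ u)
    (hopt : ∀ b ∈ G.Av s, ∑ s', G.δ s b s' * (r s' + st s' * u) ≤
      ∑ s', G.δ s a s' * (r s' + st s' * u)) :
    G.dvalBox r st s a ≤ u := by
  rw [dvalBox]
  split_ifs with hQ
  · refine Finset.sup'_le _ _ fun b hb => ?_
    obtain ⟨hb, hpos⟩ := Finset.mem_filter.1 hb
    rw [div_le_iff₀ hpos]
    have := hopt b hb
    simp only [G.sum_mul_add_mul, sub_mul, Finset.sum_sub_distrib] at this ⊢
    linarith
  · exact hu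

lemma le_dvalCirc {l : ℝ} (hl : l ≤ 1)
    (hopt : ∀ b ∈ G.Av s, ∑ s', G.δ s a s' * (r s' + st s' * l) ≤
      ∑ s', G.δ s b s' * (r s' + st s' * l)) :
    l ≤ G.dvalCirc r st s a := by
  rw [dvalCirc]
  split_ifs with hQ
  · refine Finset.le_inf' _ _ fun b hb => ?_
    obtain ⟨hb, hpos⟩ := Finset.mem_filter.1 hb
    rw [le_div_iff₀ hpos]
    have := hopt b hb
    simp only [G.sum_mul_add_mul, sub_mul, Finset.sum_sub_distrib] at this ⊢
    linarith
  · exact hl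

lemma sum_le_of_dvalBox_le {x u : ℝ} (hxu : x ≤ u) (hdx : G.dvalBox r st s a ≤ x)
    (hopt : ∀ b ∈ G.Av s, ∑ s', G.δ s b s' * (r s' + st s' * u) ≤
      ∑ s', G.δ s a s' * (r s' + st s' * u)) :
    ∀ b ∈ G.Av s, ∑ s', G.δ s b s' * (r s' + st s' * x) ≤
      ∑ s', G.δ s a s' * (r s' + st s' * x) := by
  intro b hb
  have hu := hopt b hb
  simp only [G.sum_mul_add_mul] at hu ⊢
  refine add_mul_le_add_mul_of_div_le hxu hu fun hpos => ?_
  have hdiv := G.div_le_dvalBox r st s a hb (by simpa only [sub_mul, Finset.sum_sub_distrib])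
  simp only [sub_mul, Finset.sum_sub_distrib] at hdiv
  exact hdiv.trans hdx

lemma sum_le_of_le_dvalCirc {x l : ℝ} (hlx : l ≤ x) (hdx : x ≤ G.dvalCirc r st s a)
    (hopt : ∀ b ∈ G.Av s, ∑ s', G.δ s a s' * (r s' + st s' * l) ≤
      ∑ s', G.δ s b s' * (r s' + st s' * l)) :
    ∀ b ∈ G.Av s, ∑ s', G.δ s a s' * (r s' + st s' * x) ≤
      ∑ s', G.δ s b s' * (r s' + st s' * x) := by
  intro b hb
  have hl := hopt b hb
  simp only [G.sum_mul_add_mul] at hl ⊢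
  refine add_mul_le_add_mul_of_le_div hlx hl fun hpos => ?_
  have hdiv := G.dvalCirc_le_div r st s a hb (by simpa only [sub_mul, Finset.sum_sub_distrib])
  simp only [sub_mul, Finset.sum_sub_distrib] at hdiv
  exact hdx.trans hdiv

end DecisionValue

end SG

namespace SG.SVIRec

variable {S A : Type} [Fintype S] [DecidableEq S] {G : SG S A} {hne : G.SUnk.Nonempty}
  {reach stay : ℕ → S → ℝ} {α : ℕ → S → A} {l u dl du : ℕ → ℝ} {V : S → ℝ}

theorem stay_nonneg (hrec : G.SVIRec hne reach stay α l u dl du) (k : ℕ) (s : S) :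
    0 ≤ stay k s := by
  obtain ⟨hF, hZ, h0, -, -, -, -, -, -, -, -, hstay, -⟩ := hrec
  induction k generalizing s with
  | zero =>
    rcases G.mem_F_or_mem_Z_or_mem_SUnk s with hs | hs | hs
    · exact (hF 0 s hs).2.ge
    · exact (hZ 0 s hs).2.ge
    · exact (h0 s hs).2.ge.trans' zero_le_one
  | succ k ih =>
    rcases G.mem_F_or_mem_Z_or_mem_SUnk s with hs | hs | hs
    · exact (hF _ s hs).2.ge
    · exact (hZ _ s hs).2.ge
    · rw [hstay k s hs]
      exact Finset.sum_nonneg fun s' _ => mul_nonneg (G.δ_nonneg _ _ _) (ih s')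

theorem le_of_le_on_SUnk (hrec : G.SVIRec hne reach stay α l u dl du)
    (hV : IsFixedPt G.bellman V) {k : ℕ} {x : ℝ}
    (h : ∀ s ∈ G.SUnk, V s ≤ reach k s + stay k s * x) (s : S) :
    V s ≤ reach k s + stay k s * x := by
  obtain ⟨hF, hZ, -⟩ := hrec
  rcases G.mem_F_or_mem_Z_or_mem_SUnk s with hs | hs | hs
  · simp [G.eq_one_of_isFixedPt hV hs, hF k s hs]
  · simp [G.eq_zero_of_isFixedPt hV hs, hZ k s hs]
  · exact h s hs

theorem ge_of_ge_on_SUnk (hrec : G.SVIRec hne reach stay α l u dl du)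
    (hV : IsFixedPt G.bellman V) {k : ℕ} {x : ℝ}
    (h : ∀ s ∈ G.SUnk, reach k s + stay k s * x ≤ V s) (s : S) :
    reach k s + stay k s * x ≤ V s := by
  obtain ⟨hF, hZ, -⟩ := hrec
  rcases G.mem_F_or_mem_Z_or_mem_SUnk s with hs | hs | hs
  · simp [G.eq_one_of_isFixedPt hV hs, hF k s hs]
  · simp [G.eq_zero_of_isFixedPt hV hs, hZ k s hs]
  · exact h s hs

theorem monotone_du (hrec : G.SVIRec hne reach stay α l u dl du) : Monotone du := by
  obtain ⟨-, -, -, -, -, -, -, -, -, -, -, -, hdu, -⟩ := hrec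
  refine monotone_nat_of_le_succ fun k => ?_
  rw [hdu k]
  split_ifs
  exacts [le_max_left _ _, le_rfl]

theorem antitone_dl (hrec : G.SVIRec hne reach stay α l u dl du) : Antitone dl := by
  obtain ⟨-, -, -, -, -, -, -, -, -, -, -, -, -, hdl, -⟩ := hrec
  refine antitone_nat_of_succ_le fun k => ?_
  rw [hdl k]
  split_ifs
  exacts [min_le_left _ _, le_rfl]

theorem dvalBox_le_du_succ (hrec : G.SVIRec hne reach stay α l u dl du) (k : ℕ) (s : S)
    (hs : s ∈ G.SUnk) (hb : s ∈ G.SBox) :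
    G.dvalBox (reach k) (stay k) s (α (k + 1) s) ≤ du (k + 1) := by
  obtain ⟨-, -, -, -, -, -, -, -, -, -, -, -, hdu, -⟩ := hrec
  have hmem : s ∈ G.SUnk ∩ G.SBox := Finset.mem_inter.2 ⟨hs, hb⟩
  rw [hdu k, dif_pos ⟨s, hmem⟩]
  exact le_max_of_le_right
    (Finset.le_sup' (fun s => G.dvalBox (reach k) (stay k) s (α (k + 1) s)) hmem)

theorem dl_succ_le_dvalCirc (hrec : G.SVIRec hne reach stay α l u dl du) (k : ℕ) (s : S)
    (hs : s ∈ G.SUnk) (hb : s ∉ G.SBox) :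
    dl (k + 1) ≤ G.dvalCirc (reach k) (stay k) s (α (k + 1) s) := by
  obtain ⟨-, -, -, -, -, -, -, -, -, -, -, -, -, hdl, -⟩ := hrec
  have hmem : s ∈ G.SUnk \ G.SBox := Finset.mem_sdiff.2 ⟨hs, hb⟩
  rw [hdl k, dif_pos ⟨s, hmem⟩]
  exact min_le_of_right_le
    (Finset.inf'_le (fun s => G.dvalCirc (reach k) (stay k) s (α (k + 1) s)) hmem)

theorem du_succ_le_u (hrec : G.SVIRec hne reach stay α l u dl du) {k : ℕ} (hk : du k ≤ u k) :
    du (k + 1) ≤ u k := by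
  have hmono := hrec.monotone_du (Nat.zero_le k)
  obtain ⟨-, -, -, -, -, hdu0, -, -, hmaxopt, -, -, -, hdu, -⟩ := hrec
  have hu : 0 ≤ u k := hdu0 ▸ hmono.trans hk
  rw [hdu k]
  split_ifs
  · refine max_le hk (Finset.sup'_le _ _ fun s hs => ?_)
    obtain ⟨hs, hb⟩ := Finset.mem_inter.1 hs
    exact G.dvalBox_le _ _ s _ hu (hmaxopt k s hs hb)
  · exact hk

theorem l_le_dl_succ (hrec : G.SVIRec hne reach stay α l u dl du) {k : ℕ} (hk : l k ≤ dl k) :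
    l k ≤ dl (k + 1) := by
  have hanti := hrec.antitone_dl (Nat.zero_le k)
  obtain ⟨-, -, -, -, -, -, hdl0, -, -, hminopt, -, -, -, hdl, -⟩ := hrec
  have hl : l k ≤ 1 := hdl0 ▸ hk.trans hanti
  rw [hdl k]
  split_ifs
  · refine le_min hk (Finset.le_inf' _ _ fun s hs => ?_)
    obtain ⟨hs, hb⟩ := Finset.mem_sdiff.1 hs
    exact G.le_dvalCirc _ _ s _ hl (hminopt k s hs hb)
  · exact hk

theorem du_le_u (hrec : G.SVIRec hne reach stay α l u dl du) (k : ℕ) : du k ≤ u k := by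
  have hstep := @hrec.du_succ_le_u
  obtain ⟨-, -, -, -, hu0, hdu0, -, -, -, -, -, -, -, -, hu, -⟩ := hrec
  induction k with
  | zero => rw [hdu0, hu0]; exact zero_le_one
  | succ k ih =>
    have h := hstep ih
    rw [hu k]
    split_ifs
    exacts [le_min h (le_max_left _ _), h]

theorem l_le_dl (hrec : G.SVIRec hne reach stay α l u dl du) (k : ℕ) : l k ≤ dl k := by
  have hstep := @hrec.l_le_dl_succ
  obtain ⟨-, -, -, hl0, -, -, hdl0, -, -, -, -, -, -, -, -, hl⟩ := hrec
  induction k with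
  | zero => rw [hdl0, hl0]; exact zero_le_one
  | succ k ih =>
    have h := hstep ih
    rw [hl k]
    split_ifs
    exacts [max_le h (min_le_left _ _), h]

theorem le_succ_of_le (hrec : G.SVIRec hne reach stay α l u dl du)
    (hV : IsFixedPt G.bellman V) {k : ℕ} {x : ℝ} (hxu : x ≤ u k) (hdux : du (k + 1) ≤ x)
    (h : ∀ s ∈ G.SUnk, V s ≤ reach k s + stay k s * x) :
    ∀ s ∈ G.SUnk, V s ≤ reach (k + 1) s + stay (k + 1) s * x := by
  have hall := hrec.le_of_le_on_SUnk hV h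
  have hdv := hrec.dvalBox_le_du_succ k
  obtain ⟨-, -, -, -, -, -, -, hαmem, hmaxopt, -, hreach, hstay, -⟩ := hrec
  intro s hs
  rw [hreach k s hs, hstay k s hs, ← G.sum_mul_add_mul]
  exact G.le_sum_of_isFixedPt hV hall hs (hαmem k s hs) fun hb =>
    G.sum_le_of_dvalBox_le _ _ s _ hxu ((hdv s hs hb).trans hdux) (hmaxopt k s hs hb)

theorem succ_le_of_le (hrec : G.SVIRec hne reach stay α l u dl du)
    (hV : IsFixedPt G.bellman V) {k : ℕ} {x : ℝ} (hlx : l k ≤ x) (hxdl : x ≤ dl (k + 1))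
    (h : ∀ s ∈ G.SUnk, reach k s + stay k s * x ≤ V s) :
    ∀ s ∈ G.SUnk, reach (k + 1) s + stay (k + 1) s * x ≤ V s := by
  have hall := hrec.ge_of_ge_on_SUnk hV h
  have hdv := hrec.dl_succ_le_dvalCirc k
  obtain ⟨-, -, -, -, -, -, -, hαmem, -, hminopt, hreach, hstay, -⟩ := hrec
  intro s hs
  rw [hreach k s hs, hstay k s hs, ← G.sum_mul_add_mul]
  exact G.sum_le_of_isFixedPt hV hall hs (hαmem k s hs) fun hb =>
    G.sum_le_of_le_dvalCirc _ _ s _ hlx (hxdl.trans (hdv s hs hb)) (hminopt k s hs hb)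

theorem sup_le_u_succ (hrec : G.SVIRec hne reach stay α l u dl du) {k : ℕ}
    (hm : G.SUnk.sup' hne V ≤ u k)
    (h : ∀ s ∈ G.SUnk,
      V s ≤ reach (k + 1) s + stay (k + 1) s * max (du (k + 1)) (G.SUnk.sup' hne V)) :
    G.SUnk.sup' hne V ≤ u (k + 1) := by
  obtain ⟨-, -, -, -, -, -, -, -, -, -, -, -, -, -, hu, -⟩ := hrec
  rw [hu k]
  split_ifs with hst
  · refine le_min hm ?_
    rcases le_total (G.SUnk.sup' hne V) (du (k + 1)) with hdu | hdu
    · exact le_max_of_le_left hdu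
    · obtain ⟨t, ht, hVt⟩ := Finset.exists_mem_eq_sup' hne V
      have hbound := h t ht
      rw [max_eq_right hdu, hVt] at hbound
      rw [hVt]
      exact le_max_of_le_right ((le_div_one_sub_of_le_add_mul (hst t ht) hbound).trans
        (Finset.le_sup' (fun s => reach (k + 1) s / (1 - stay (k + 1) s)) ht))
  · exact hm

theorem l_succ_le_inf (hrec : G.SVIRec hne reach stay α l u dl du) {k : ℕ}
    (hm : l k ≤ G.SUnk.inf' hne V)
    (h : ∀ s ∈ G.SUnk,
      reach (k + 1) s + stay (k + 1) s * min (dl (k + 1)) (G.SUnk.inf' hne V) ≤ V s) :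
    l (k + 1) ≤ G.SUnk.inf' hne V := by
  obtain ⟨-, -, -, -, -, -, -, -, -, -, -, -, -, -, -, hl⟩ := hrec
  rw [hl k]
  split_ifs with hst
  · refine max_le hm ?_
    rcases le_total (dl (k + 1)) (G.SUnk.inf' hne V) with hdl | hdl
    · exact min_le_of_left_le hdl
    · obtain ⟨t, ht, hVt⟩ := Finset.exists_mem_eq_inf' hne V
      have hbound := h t ht
      rw [min_eq_right hdl, hVt] at hbound
      rw [hVt]
      exact min_le_of_right_le ((Finset.inf'_le
        (fun s => reach (k + 1) s / (1 - stay (k + 1) s)) ht).trans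
        (div_one_sub_le_of_add_mul_le (hst t ht) hbound))
  · exact hm

theorem le_max_du_sup_and_sup_le_u (hrec : G.SVIRec hne reach stay α l u dl du)
    (hV : IsFixedPt G.bellman V) (hV1 : ∀ s, V s ≤ 1) (k : ℕ) :
    (∀ s ∈ G.SUnk, V s ≤ reach k s + stay k s * max (du k) (G.SUnk.sup' hne V)) ∧
      G.SUnk.sup' hne V ≤ u k := by
  induction k with
  | zero =>
    obtain ⟨-, -, h0, -, hu0, -⟩ := hrec
    refine ⟨fun s hs => ?_, hu0 ▸ Finset.sup'_le _ _ fun s _ => hV1 s⟩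
    rw [(h0 s hs).1, (h0 s hs).2, zero_add, one_mul]
    exact le_max_of_le_right (Finset.le_sup' V hs)
  | succ k ih =>
    obtain ⟨ihV, ihm⟩ := ih
    have hx : max (du (k + 1)) (G.SUnk.sup' hne V) ≤ u k :=
      max_le (hrec.du_succ_le_u (hrec.du_le_u k)) ihm
    have hbound := hrec.le_succ_of_le hV hx (le_max_left _ _) fun s hs =>
      (ihV s hs).trans (by
        gcongr
        exacts [hrec.stay_nonneg k s, hrec.monotone_du k.le_succ])
    exact ⟨hbound, hrec.sup_le_u_succ ihm hbound⟩

theorem min_dl_inf_le_and_l_le_inf (hrec : G.SVIRec hne reach stay α l u dl du)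
    (hV : IsFixedPt G.bellman V) (hV0 : ∀ s, 0 ≤ V s) (k : ℕ) :
    (∀ s ∈ G.SUnk, reach k s + stay k s * min (dl k) (G.SUnk.inf' hne V) ≤ V s) ∧
      l k ≤ G.SUnk.inf' hne V := by
  induction k with
  | zero =>
    obtain ⟨-, -, h0, hl0, -⟩ := hrec
    refine ⟨fun s hs => ?_, hl0 ▸ Finset.le_inf' _ _ fun s _ => hV0 s⟩
    rw [(h0 s hs).1, (h0 s hs).2, zero_add, one_mul]
    exact min_le_of_right_le (Finset.inf'_le V hs)
  | succ k ih =>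
    obtain ⟨ihV, ihm⟩ := ih
    have hx : l k ≤ min (dl (k + 1)) (G.SUnk.inf' hne V) :=
      le_min (hrec.l_le_dl_succ (hrec.l_le_dl k)) ihm
    have hbound := hrec.succ_le_of_le hV hx (min_le_left _ _) fun s hs =>
      (le_trans (by
        gcongr
        exacts [hrec.stay_nonneg k s, hrec.antitone_dl k.le_succ]) (ihV s hs))
    exact ⟨hbound, hrec.l_succ_le_inf ihm hbound⟩

end SG.SVIRec

/-- Sound value iteration for stochastic games without end components — correctness
of the approximations (Thm. 3.2): along any run of the sound-value-iteration
recursion, `reach_k(s) + stay_k(s)·l_k ≤ V(s) ≤ reach_k(s) + stay_k(s)·u_k`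
for every `k` and every `s ∈ S?`. -/
theorem svi_sg_approximations_correct {S A : Type} [Fintype S] [DecidableEq S]
    (G : SG S A) (V : S → ℝ) (hV : G.IsValue V)
    (hne : G.SUnk.Nonempty)
    (reach stay : ℕ → S → ℝ) (α : ℕ → S → A) (l u dl du : ℕ → ℝ)
    (hrec : G.SVIRec hne reach stay α l u dl du) :
    ∀ k, ∀ s ∈ G.SUnk,
      reach k s + stay k s * l k ≤ V s ∧ V s ≤ reach k s + stay k s * u k := by
  intro k s hs
  obtain ⟨hlower, hl⟩ := hrec.min_dl_inf_le_and_l_le_inf hV.2.1 (fun s => (hV.1 s).1) k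
  obtain ⟨hupper, hu⟩ := hrec.le_max_du_sup_and_sup_le_u hV.2.1 (fun s => (hV.1 s).2) k
  have hstay := hrec.stay_nonneg k s
  constructor
  · calc reach k s + stay k s * l k
        ≤ reach k s + stay k s * min (dl k) (G.SUnk.inf' hne V) := by
          gcongr
          exact le_min (hrec.l_le_dl k) hl
      _ ≤ V s := hlower s hs
  · calc V s ≤ reach k s + stay k s * max (du k) (G.SUnk.sup' hne V) := hupper s hs
      _ ≤ reach k s + stay k s * u k := by
          gcongr
          exact max_le (hrec.du_le_u k) hu
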